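/- Let p be an odd prime, m a positive integer with gcd(m−1,p−1)=1, NSQ the nonsquares in F_p^*, S(i,j)=∑_{c∈F_p^*} η(c)ξ_p^{c^{1−m}j−ci}, and g the quadratic Gauss sum. Then ∑_{i∈NSQ} S(i,j) = −((p−1)/2)·η(−1)·g if j=0, and ∑_{i∈NSQ} S(i,j) = ((η(−1)−η(j))/2)·g if j≠0. -/

import Mathlib

/-- `ξ_p^y` for `y : ZMod p`, where `ξ_p = exp(2πi/p)`. -/
noncomputable def xi (p : ℕ) (y : ZMod p) : ℂ :=
  Complex.exp (2 * Real.pi * Complex.I * y.val / p)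

/-- The quadratic Gauss sum `g = ∑_{y ∈ F_p^*} η(y) ξ_p^y`. -/
noncomputable def gaussSum' (p : ℕ) [Fact p.Prime] : ℂ :=
  ∑ y ∈ Finset.univ.filter (fun y : ZMod p => y ≠ 0),
    (quadraticChar (ZMod p) y : ℂ) * xi p y

/-- `S^{(m)}(i,j) = ∑_{c ∈ F_p^*} η(c) ξ_p^{c^{1-m} j - c i}`. -/
noncomputable def Sm (p : ℕ) [Fact p.Prime] (m : ℕ) (i j : ZMod p) : ℂ :=
  ∑ c ∈ Finset.univ.filter (fun c : ZMod p => c ≠ 0),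
    (quadraticChar (ZMod p) c : ℂ) * xi p (c ^ ((1 : ℤ) - m) * j - c * i)

/-!
Write the indicator of the nonsquares as `(1 - η i - [i = 0]) / 2`. Together with
`∑ i, ξ^{-ci} = 0` and `∑ i, η(i) ξ^{-ci} = η(-c) g` this gives, for `c ≠ 0`,
`∑_{i ∈ NSQ} ξ^{-ci} = -(1 + η(-c) g) / 2`, so the left-hand side becomes a combination of
`∑_{c ≠ 0} η(c) ξ^{c^{1-m} j}` and `∑_{c ≠ 0} ξ^{c^{1-m} j}`. As `1 - m` is coprime to `p - 1`,
hence odd, `c ↦ c^{1-m}` permutes `F_p^*` and preserves `η`; after this substitution the two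
sums are `η(j) g` (or `0` when `j = 0`) and `-1` (or `p - 1`).
-/

open Finset

theorem IsCoprime.odd_of_even_right {k n : ℤ} (h : IsCoprime k n) (hn : Even n) : Odd k := by
  by_contra hk
  rw [Int.not_odd_iff_even] at hk
  have h2 := h.isUnit_of_dvd' hk.two_dvd hn.two_dvd
  norm_num [Int.isUnit_iff] at h2

theorem isCoprime_one_sub_of_gcd_sub_one_eq_one {m n : ℕ} (h : Nat.gcd (m - 1) n = 1) :
    IsCoprime ((1 : ℤ) - m) n := by
  rcases m with _ | m
  · simpa using isCoprime_one_left
  · rw [Int.isCoprime_iff_gcd_eq_one, Nat.cast_succ, sub_add_cancel_right, Int.neg_gcd]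
    simpa using h

section FiniteField

variable {F : Type*} [Field F] [Fintype F] [DecidableEq F]

theorem quadraticChar_zpow_of_odd {k : ℤ} (hk : Odd k) (x : F) :
    quadraticChar F (x ^ k) = quadraticChar F x := by
  obtain ⟨n, rfl⟩ := hk
  rcases eq_or_ne x 0 with rfl | hx
  · rw [zero_zpow _ (by omega)]
  · rw [zpow_add_one₀ hx, zpow_mul', zpow_ofNat, map_mul,
      quadraticChar_sq_one' (zpow_ne_zero n hx), one_mul]

theorem quadraticChar_zpow_of_isCoprime (hF : ringChar F ≠ 2) {k : ℤ}
    (hk : IsCoprime k ((Fintype.card F : ℤ) - 1)) (x : F) :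
    quadraticChar F (x ^ k) = quadraticChar F x := by
  refine quadraticChar_zpow_of_odd (hk.odd_of_even_right ?_) x
  have := FiniteField.odd_card_of_char_ne_two hF
  rw [Int.even_iff]
  omega

theorem FiniteField.sum_ne_zero_comp_zpow {M : Type*} [AddCommMonoid M] {k : ℤ}
    (hk : IsCoprime k ((Fintype.card F : ℤ) - 1)) (f : F → M) :
    ∑ x ∈ univ.filter (· ≠ 0), f (x ^ k) = ∑ x ∈ univ.filter (· ≠ 0), f x := by
  obtain ⟨a, b, hab⟩ := hk
  have hinv {x : F} (hx : x ≠ 0) : x ^ (a * k) = x := by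
    have hq : x ^ ((Fintype.card F : ℤ) - 1) = 1 := by
      rw [← Nat.cast_pred Fintype.card_pos, zpow_natCast,
        FiniteField.pow_card_sub_one_eq_one x hx]
    rw [show a * k = 1 + ((Fintype.card F : ℤ) - 1) * -b by linarith, zpow_add₀ hx, zpow_mul,
      hq, one_zpow, mul_one, zpow_one]
  refine sum_nbij' (· ^ k) (· ^ a) ?_ ?_ ?_ ?_ fun _ _ => rfl <;>
    simp only [mem_filter, mem_univ, true_and, ne_eq]
  · exact fun x hx => zpow_ne_zero k hx
  · exact fun x hx => zpow_ne_zero a hx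
  · exact fun x hx => by rw [← zpow_mul, mul_comm, hinv hx]
  · exact fun x hx => by rw [← zpow_mul, hinv hx]

theorem AddChar.sum_ne_zero_mulShift {ψ : AddChar F ℂ} (hψ : ψ.IsPrimitive) (t : F) :
    ∑ x ∈ univ.filter (· ≠ 0), ψ (x * t)
      = if t = 0 then (Fintype.card F : ℂ) - 1 else -1 := by
  rw [filter_ne', sum_erase_eq_sub (mem_univ 0), AddChar.sum_mulShift t hψ, zero_mul,
    AddChar.map_zero_eq_one]
  split_ifs <;> ring

theorem sum_quadraticChar_mul_addChar_mul (ψ : AddChar F ℂ) {t : F} (ht : t ≠ 0) :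
    ∑ x, (quadraticChar F x : ℂ) * ψ (x * t)
      = quadraticChar F t * ∑ x, (quadraticChar F x : ℂ) * ψ x := by
  have h := gaussSum_mulShift ((quadraticChar F).ringHomComp (Int.castRingHom ℂ)) ψ
    (Units.mk0 t ht)
  simp only [gaussSum, AddChar.mulShift_apply, MulChar.ringHomComp_apply, Units.val_mk0,
    eq_intCast] at h
  rw [← h, ← mul_assoc, ← Int.cast_mul, ← sq, quadraticChar_sq_one ht, Int.cast_one, one_mul]
  exact sum_congr rfl fun x _ => by rw [mul_comm x t]

theorem sum_ne_zero_quadraticChar_mul_addChar_mul (hF : ringChar F ≠ 2) (ψ : AddChar F ℂ)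
    (t : F) :
    ∑ x ∈ univ.filter (· ≠ 0), (quadraticChar F x : ℂ) * ψ (x * t)
      = if t = 0 then 0 else quadraticChar F t * ∑ x, (quadraticChar F x : ℂ) * ψ x := by
  rw [sum_filter_of_ne fun x _ hx => by rintro rfl; simp at hx]
  split_ifs with ht
  · simp only [ht, mul_zero, AddChar.map_zero_eq_one, mul_one]
    exact_mod_cast quadraticChar_sum_zero hF
  · exact sum_quadraticChar_mul_addChar_mul ψ ht

theorem sum_filter_quadraticChar_eq_neg_one (f : F → ℂ) :
    ∑ x ∈ univ.filter (fun x => quadraticChar F x = -1), f x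
      = (∑ x, f x - ∑ x, (quadraticChar F x : ℂ) * f x - f 0) / 2 := by
  rw [sum_filter, eq_div_iff two_ne_zero, sum_mul, ← Fintype.sum_ite_eq' 0 f,
    ← sum_sub_distrib, ← sum_sub_distrib]
  refine sum_congr rfl fun x _ => ?_
  rcases eq_or_ne x 0 with rfl | hx
  · simp
  · rcases quadraticChar_dichotomy hx with h | h <;> simp [h, hx, mul_two]

theorem sum_nonsquares_addChar_mul {ψ : AddChar F ℂ} (hψ : ψ.IsPrimitive) {t : F}
    (ht : t ≠ 0) :
    ∑ x ∈ univ.filter (fun x => quadraticChar F x = -1), ψ (x * t)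
      = -(1 + quadraticChar F t * ∑ x, (quadraticChar F x : ℂ) * ψ x) / 2 := by
  rw [sum_filter_quadraticChar_eq_neg_one, AddChar.sum_mulShift t hψ, if_neg ht,
    sum_quadraticChar_mul_addChar_mul ψ ht, zero_mul, AddChar.map_zero_eq_one]
  ring

theorem quadraticChar_mul_sum_nonsquares_addChar_mul_neg {ψ : AddChar F ℂ}
    (hψ : ψ.IsPrimitive) {c : F} (hc : c ≠ 0) :
    quadraticChar F c * ∑ x ∈ univ.filter (fun x => quadraticChar F x = -1), ψ (x * -c)
      = -(quadraticChar F c + quadraticChar F (-1) * ∑ x, (quadraticChar F x : ℂ) * ψ x)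
          / 2 := by
  have hsq : (quadraticChar F c : ℂ) ^ 2 = 1 := by exact_mod_cast quadraticChar_sq_one hc
  rw [sum_nonsquares_addChar_mul hψ (neg_ne_zero.2 hc), neg_eq_neg_one_mul c, map_mul,
    Int.cast_mul]
  linear_combination (-(quadraticChar F (-1) * ∑ x, (quadraticChar F x : ℂ) * ψ x) / 2) * hsq

end FiniteField

theorem xi_eq_stdAddChar (p : ℕ) [NeZero p] (y : ZMod p) : xi p y = ZMod.stdAddChar y := by
  rw [ZMod.stdAddChar_apply, ZMod.toCircle_apply, xi]

theorem gaussSum'_eq_sum_stdAddChar (p : ℕ) [Fact p.Prime] :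
    gaussSum' p = ∑ x, (quadraticChar (ZMod p) x : ℂ) * ZMod.stdAddChar x := by
  rw [gaussSum', sum_filter_of_ne fun x _ hx => by rintro rfl; simp at hx]
  simp only [xi_eq_stdAddChar]

theorem sum_nonsquares_Sm_eq (p : ℕ) [Fact p.Prime] (m : ℕ) (j : ZMod p) :
    ∑ i ∈ univ.filter (fun i : ZMod p => quadraticChar (ZMod p) i = -1), Sm p m i j
      = ∑ c ∈ univ.filter (· ≠ 0), ZMod.stdAddChar (c ^ ((1 : ℤ) - m) * j)
          * ((quadraticChar (ZMod p) c : ℂ)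
            * ∑ i ∈ univ.filter (fun i : ZMod p => quadraticChar (ZMod p) i = -1),
                ZMod.stdAddChar (i * -c)) := by
  simp only [Sm, mul_sum]
  rw [sum_comm]
  refine sum_congr rfl fun c _ => sum_congr rfl fun i _ => ?_
  rw [xi_eq_stdAddChar, sub_eq_add_neg, AddChar.map_add_eq_mul, mul_neg, mul_comm c i]
  ring

theorem sum_Sm_over_nonsquares_general (p : ℕ) [Fact p.Prime] (hp : p ≠ 2)
    (m : ℕ) (hgcd : Nat.gcd (m - 1) (p - 1) = 1) (j : ZMod p) :
    ∑ i ∈ Finset.univ.filter (fun i : ZMod p => quadraticChar (ZMod p) i = -1),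
        Sm p m i j
      = if j = 0 then
          -(((p : ℂ) - 1) / 2) * (quadraticChar (ZMod p) (-1) : ℂ) * gaussSum' p
        else
          (((quadraticChar (ZMod p) (-1) : ℂ) - (quadraticChar (ZMod p) j : ℂ)) / 2)
            * gaussSum' p := by
  have hψ := ZMod.isPrimitive_stdAddChar p
  have hF : ringChar (ZMod p) ≠ 2 := by rwa [ZMod.ringChar_zmod_n]
  have hk : IsCoprime ((1 : ℤ) - m) ((Fintype.card (ZMod p) : ℤ) - 1) := by
    rw [ZMod.card, ← Nat.cast_pred (Fact.out : p.Prime).pos]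
    exact isCoprime_one_sub_of_gcd_sub_one_eq_one hgcd
  set G := ∑ x, (quadraticChar (ZMod p) x : ℂ) * ZMod.stdAddChar x
  let f d := ZMod.stdAddChar (d * j)
    * (-(quadraticChar (ZMod p) d + quadraticChar (ZMod p) (-1) * G) / 2)
  calc _ = ∑ c ∈ univ.filter (· ≠ 0), f (c ^ ((1 : ℤ) - m)) := by
        rw [sum_nonsquares_Sm_eq]
        refine sum_congr rfl fun c hc => ?_
        rw [quadraticChar_mul_sum_nonsquares_addChar_mul_neg hψ (mem_filter.1 hc).2,
          ← quadraticChar_zpow_of_isCoprime hF hk c]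
    _ = ∑ d ∈ univ.filter (· ≠ 0), f d := FiniteField.sum_ne_zero_comp_zpow hk f
    _ = -(1 / 2) * ∑ d ∈ univ.filter (· ≠ 0),
            (quadraticChar (ZMod p) d : ℂ) * ZMod.stdAddChar (d * j)
          - quadraticChar (ZMod p) (-1) * G / 2
            * ∑ d ∈ univ.filter (· ≠ 0), ZMod.stdAddChar (d * j) := by
        rw [mul_sum, mul_sum, ← sum_sub_distrib]
        exact sum_congr rfl fun d _ => by ring
    _ = _ := by
        rw [sum_ne_zero_quadraticChar_mul_addChar_mul hF, AddChar.sum_ne_zero_mulShift hψ,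
          ZMod.card, gaussSum'_eq_sum_stdAddChar]
        split_ifs <;> ring

theorem sum_Sm_over_nonsquares (p : ℕ) [Fact p.Prime] (hp : p ≠ 2)
    (m : ℕ) (hm : 1 ≤ m) (hgcd : Nat.gcd (m - 1) (p - 1) = 1) (j : ZMod p) :
    ∑ i ∈ Finset.univ.filter (fun i : ZMod p => quadraticChar (ZMod p) i = -1),
        Sm p m i j
      = if j = 0 then
          -(((p : ℂ) - 1) / 2) * (quadraticChar (ZMod p) (-1) : ℂ) * gaussSum' p
        else
          (((quadraticChar (ZMod p) (-1) : ℂ) - (quadraticChar (ZMod p) j : ℂ)) / 2)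
            * gaussSum' p :=
  sum_Sm_over_nonsquares_general p hp m hgcd j
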